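/- Let ε > 0, p₀ and p₁ probability measures on ℝ^D, f* a measurable potential with Z_{f*}(x₀) := ∫ exp((f*(x₁) − ‖x₀−x₁‖²/2)/ε) dx₁ finite and positive p₀-a.e., and let π* be the probability measure with density π*(x₀,x₁) = p₀(x₀) exp((f*(x₁) − ‖x₀−x₁‖²/2)/ε)/Z_{f*}(x₀), assumed to have second marginal p₁. For measurable f, ξ define the nonnegative measure π^{f,ξ}(x₀,x₁) := (2πε)^{−D/2} p₀(x₀) exp(−ξ(x₀)) exp((f(x₁) − ‖x₀−x₁‖²/2)/ε). Then ε·KL(π* ‖ π^{f,ξ}) = L* − L(f,ξ), where L(f,ξ) := ε(1 − (D/2)log(2πε)) + E_{p₁}[f] − ε E_{p₀}[ξ] − ε E_{p₀} E_{z∼N(0,I)}[exp(f(x₀+√ε z)/ε − ξ(x₀))], L* := E_{p₁}[f*] − ε E_{p₀}[log Z_{f*}], and KL is the generalized divergence for nonnegative measures KL(μ‖ν) = ∫[(dμ/dν)log(dμ/dν) − dμ/dν + 1]dν. -/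

import Mathlib

/-!
Both plans have densities with respect to `p₀ ⊗ Lebesgue`, so `dπ*/dπ^{f,ξ}` is the ratio of
the densities, and `ε log (dπ*/dπ^{f,ξ})` splits into `ε (ξ - log Z + (D/2) log (2πε))` in `x₀`
plus `f* - f` in `x₁`. Integrating against `π*`, whose marginals are `p₀` and `p₁`, evaluates
`ε ∫ log (dπ*/dπ^{f,ξ}) dπ*`. The generalized divergence adds the mass difference
`π^{f,ξ}(univ) - π*(univ)`, and the substitution `x₁ = x₀ + √ε z` turns the mass of `π^{f,ξ}`
into the Gaussian expectation in `L(f,ξ)`. That mass is finite because `klFun (dπ*/dπ^{f,ξ})` is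
integrable and `klFun r + r ≥ 1/2`.
-/

open MeasureTheory Real

/-- Generalized Kullback–Leibler divergence between nonnegative measures. -/
noncomputable def genKL {X : Type*} [MeasurableSpace X] (μ ν : Measure X) : ℝ :=
  ∫ x, ((μ.rnDeriv ν x).toReal * Real.log (μ.rnDeriv ν x).toReal
      - (μ.rnDeriv ν x).toReal + 1) ∂ν

open InformationTheory Set Module
open scoped ENNReal

lemma half_le_klFun_add_self {x : ℝ} (hx : 0 ≤ x) : 1 / 2 ≤ klFun x + x := by
  rcases hx.eq_or_lt with rfl | hx
  · norm_num [klFun_zero]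
  have h := self_sub_one_le_mul_log (x := 2 * x) (by positivity)
  rw [log_mul two_ne_zero hx.ne'] at h
  have := log_two_lt_d9
  rw [klFun_apply]
  nlinarith

section GenKL

variable {α : Type*} [MeasurableSpace α] {μ ν : Measure α}

lemma genKL_integrand_eq_klFun (μ ν : Measure α) :
    (fun x ↦ (μ.rnDeriv ν x).toReal * log (μ.rnDeriv ν x).toReal
        - (μ.rnDeriv ν x).toReal + 1) = fun x ↦ klFun (μ.rnDeriv ν x).toReal := by
  ext x
  rw [klFun_apply]
  ring

lemma isFiniteMeasure_of_integrable_klFun_rnDeriv [IsFiniteMeasure μ]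
    (h : Integrable (fun x ↦ klFun (μ.rnDeriv ν x).toReal) ν) : IsFiniteMeasure ν := by
  have hconst : Integrable (fun _ ↦ (1 / 2 : ℝ)) ν :=
    (h.add Measure.integrable_toReal_rnDeriv).mono' aestronglyMeasurable_const
      (ae_of_all _ fun x ↦ by
        rw [norm_of_nonneg (by norm_num)]
        exact half_le_klFun_add_self ENNReal.toReal_nonneg)
  exact (integrable_const_iff.mp hconst).resolve_left (by norm_num)

lemma genKL_eq_integral_llr [IsFiniteMeasure μ] [IsFiniteMeasure ν] (hμν : μ ≪ ν)
    (h : Integrable (fun x ↦ klFun (μ.rnDeriv ν x).toReal) ν) :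
    genKL μ ν = ∫ x, llr μ ν x ∂μ + ν.real univ - μ.real univ := by
  rw [genKL, genKL_integrand_eq_klFun,
    integral_klFun_rnDeriv hμν ((integrable_klFun_rnDeriv_iff hμν).mp h)]

lemma llr_withDensity_ofReal_ae_eq [SigmaFinite ν] {g h : α → ℝ} (hg : Measurable g)
    (hh : Measurable h) (hg0 : ∀ x, 0 ≤ g x) (hh0 : ∀ x, 0 < h x) :
    llr (ν.withDensity fun x ↦ ENNReal.ofReal (g x))
        (ν.withDensity fun x ↦ ENNReal.ofReal (h x)) =ᵐ[ν] fun x ↦ log (g x / h x) := by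
  have hright := Measure.rnDeriv_withDensity_right
    (ν.withDensity fun x ↦ ENNReal.ofReal (g x)) ν hh.ennreal_ofReal.aemeasurable
    (ae_of_all _ fun x ↦ by simp [hh0 x])
    (ae_of_all _ fun _ ↦ ENNReal.ofReal_ne_top)
  have hleft := Measure.rnDeriv_withDensity ν hg.ennreal_ofReal
  filter_upwards [hright, hleft] with x hr hl
  rw [llr_def]
  simp only [hr, hl, ENNReal.toReal_mul, ENNReal.toReal_inv,
    ENNReal.toReal_ofReal (hg0 x), ENNReal.toReal_ofReal (hh0 x).le, inv_mul_eq_div]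

end GenKL

section Prod

variable {X Y : Type*} [MeasurableSpace X] [MeasurableSpace Y]

lemma map_fst_withDensity_div_integral (p : Measure X) [SFinite p] (ν : Measure Y)
    [SFinite ν] {k : X × Y → ℝ} (hk : Measurable k) (hk0 : ∀ q, 0 ≤ k q) {Z : X → ℝ}
    (hZdef : ∀ x, Z x = ∫ y, k (x, y) ∂ν) (hZpos : ∀ x, 0 < Z x) :
    ((p.prod ν).withDensity fun q ↦ ENNReal.ofReal (k q / Z q.1)).map Prod.fst = p := by
  have hZm : Measurable Z := by
    rw [funext hZdef]
    exact hk.stronglyMeasurable.integral_prod_right'.measurable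
  have hnormalized : ∀ x, ∫⁻ y, ENNReal.ofReal (k (x, y) / Z x) ∂ν = 1 := fun x ↦ by
    have hint : Integrable (fun y ↦ k (x, y)) ν :=
      .of_integral_ne_zero (hZdef x ▸ (hZpos x).ne')
    rw [← ofReal_integral_eq_lintegral_ofReal (hint.div_const _)
      (ae_of_all _ fun y ↦ div_nonneg (hk0 _) (hZpos x).le), integral_div, ← hZdef,
      div_self (hZpos x).ne', ENNReal.ofReal_one]
  ext s hs
  rw [Measure.map_apply measurable_fst hs, withDensity_apply _ (measurable_fst hs),
    ← prod_univ, ← Measure.prod_restrict, Measure.restrict_univ,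
    lintegral_prod (fun q ↦ ENNReal.ofReal (k q / Z q.1))
      (hk.div (hZm.comp measurable_fst)).ennreal_ofReal.aemeasurable]
  simp [hnormalized]

lemma integral_add_comp_fst_snd {μ : Measure (X × Y)} {p₀ : Measure X} {p₁ : Measure Y}
    (h₀ : μ.map Prod.fst = p₀) (h₁ : μ.map Prod.snd = p₁) {a : X → ℝ} {b : Y → ℝ}
    (ha : Integrable a p₀) (hb : Integrable b p₁) :
    ∫ q, (a q.1 + b q.2) ∂μ = ∫ x, a x ∂p₀ + ∫ y, b y ∂p₁ := by
  subst h₀ h₁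
  have ha' : Integrable (fun q : X × Y ↦ a q.1) μ := ha.comp_measurable measurable_fst
  have hb' : Integrable (fun q : X × Y ↦ b q.2) μ := hb.comp_measurable measurable_snd
  rw [integral_add ha' hb', integral_map measurable_fst.aemeasurable ha.1,
    integral_map measurable_snd.aemeasurable hb.1]

lemma measureReal_univ_withDensity_prod (p : Measure X) [SFinite p] (ν : Measure Y)
    [SFinite ν] {h : X × Y → ℝ} (hm : Measurable h) (h0 : ∀ q, 0 ≤ h q)
    [IsFiniteMeasure ((p.prod ν).withDensity fun q ↦ ENNReal.ofReal (h q))] :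
    ((p.prod ν).withDensity fun q ↦ ENNReal.ofReal (h q)).real univ
      = ∫ x, ∫ y, h (x, y) ∂ν ∂p := by
  have hlint : ((p.prod ν).withDensity fun q ↦ ENNReal.ofReal (h q)) univ
      = ∫⁻ q, ENNReal.ofReal (h q) ∂(p.prod ν) := by
    rw [withDensity_apply _ MeasurableSet.univ, Measure.restrict_univ]
  have hint : Integrable h (p.prod ν) :=
    ⟨hm.aestronglyMeasurable, (hasFiniteIntegral_iff_ofReal (ae_of_all _ h0)).mpr
      (hlint ▸ measure_lt_top _ _)⟩
  rw [← integral_prod h hint, integral_eq_lintegral_of_nonneg_ae (ae_of_all _ h0)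
    hm.aestronglyMeasurable, ← hlint, measureReal_def]

end Prod

section HeatKernel

variable {E : Type*} [NormedAddCommGroup E] [NormedSpace ℝ E] [FiniteDimensional ℝ E]
  [MeasurableSpace E] [BorelSpace E] (μ : Measure E) [μ.IsAddHaarMeasure]

lemma integral_eq_rpow_mul_integral_comp_add_sqrt_smul {ε : ℝ} (hε : 0 < ε) (x₀ : E)
    (G : E → ℝ) :
    ∫ x, G x ∂μ = ε ^ ((finrank ℝ E : ℝ) / 2) * ∫ z, G (x₀ + √ε • z) ∂μ := by
  have hsqrt : √ε ^ finrank ℝ E = ε ^ ((finrank ℝ E : ℝ) / 2) := by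
    rw [sqrt_eq_rpow, ← rpow_natCast, ← rpow_mul hε.le, one_div_mul_eq_div]
  rw [Measure.integral_comp_smul_of_nonneg μ (fun y ↦ G (x₀ + y)) √ε (hR := sqrt_nonneg ε),
    integral_add_left_eq_self, smul_eq_mul, ← hsqrt,
    mul_inv_cancel_left₀ (pow_ne_zero _ (sqrt_pos.mpr hε).ne')]

lemma integral_heatKernel_mul {ε : ℝ} (hε : 0 < ε) (x₀ : E) (F : E → ℝ) :
    ∫ x, (2 * π * ε) ^ (-(finrank ℝ E : ℝ) / 2) * exp (-‖x₀ - x‖ ^ 2 / (2 * ε)) * F x ∂μ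
      = ∫ z, F (x₀ + √ε • z) *
          ((2 * π) ^ (-(finrank ℝ E : ℝ) / 2) * exp (-‖z‖ ^ 2 / 2)) ∂μ := by
  rw [integral_eq_rpow_mul_integral_comp_add_sqrt_smul μ hε x₀, ← integral_const_mul]
  congr 1 with z
  have hnorm : ‖x₀ - (x₀ + √ε • z)‖ ^ 2 = ε * ‖z‖ ^ 2 := by
    rw [sub_add_cancel_left, norm_neg, norm_smul, norm_of_nonneg (sqrt_nonneg ε), mul_pow,
      sq_sqrt hε.le]
  have hscale : ε ^ ((finrank ℝ E : ℝ) / 2) * (2 * π * ε) ^ (-(finrank ℝ E : ℝ) / 2)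
      = (2 * π) ^ (-(finrank ℝ E : ℝ) / 2) := by
    rw [mul_rpow (by positivity) hε.le, mul_left_comm, ← rpow_add hε, neg_div, add_neg_cancel,
      rpow_zero, mul_one]
  rw [hnorm, show -(ε * ‖z‖ ^ 2) / (2 * ε) = -‖z‖ ^ 2 / 2 by field_simp, ← hscale]
  ring

end HeatKernel

section Gibbs

variable {D : ℕ} {ε : ℝ}

noncomputable def gibbsKernel (ε : ℝ) (φ : EuclideanSpace ℝ (Fin D) → ℝ)
    (q : EuclideanSpace ℝ (Fin D) × EuclideanSpace ℝ (Fin D)) : ℝ :=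
  exp ((φ q.2 - ‖q.1 - q.2‖ ^ 2 / 2) / ε)

@[fun_prop]
lemma measurable_gibbsKernel {φ : EuclideanSpace ℝ (Fin D) → ℝ} (hφ : Measurable φ) :
    Measurable (gibbsKernel ε φ) := by
  unfold gibbsKernel
  fun_prop

lemma mul_log_gibbsKernel_ratio (hε : 0 < ε) {fstar f ξ Z : EuclideanSpace ℝ (Fin D) → ℝ}
    (q : EuclideanSpace ℝ (Fin D) × EuclideanSpace ℝ (Fin D)) (hZ : 0 < Z q.1) :
    ε * log ((gibbsKernel ε fstar q / Z q.1) /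
        ((2 * π * ε) ^ (-(D : ℝ) / 2) * exp (-ξ q.1) * gibbsKernel ε f q))
      = ε * (ξ q.1 - log (Z q.1) + (D : ℝ) / 2 * log (2 * π * ε)) + (fstar q.2 - f q.2) := by
  rw [gibbsKernel, gibbsKernel, log_div (by positivity) (by positivity),
    log_div (exp_ne_zero _) hZ.ne', log_mul (by positivity) (exp_ne_zero _),
    log_mul (by positivity) (exp_ne_zero _), log_rpow (by positivity), log_exp, log_exp,
    log_exp]
  field_simp
  ring

lemma measureReal_univ_withDensity_gibbsKernel (hε : 0 < ε)
    (p₀ : Measure (EuclideanSpace ℝ (Fin D))) [SFinite p₀]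
    {f ξ : EuclideanSpace ℝ (Fin D) → ℝ} (hf : Measurable f) (hξ : Measurable ξ)
    [hfin : IsFiniteMeasure ((p₀.prod volume).withDensity fun q ↦
      ENNReal.ofReal ((2 * π * ε) ^ (-(D : ℝ) / 2) * exp (-ξ q.1) * gibbsKernel ε f q))] :
    ((p₀.prod volume).withDensity fun q ↦
      ENNReal.ofReal ((2 * π * ε) ^ (-(D : ℝ) / 2) * exp (-ξ q.1) *
        gibbsKernel ε f q)).real univ
      = ∫ x₀, (∫ z, exp (f (x₀ + √ε • z) / ε - ξ x₀) *
          ((2 * π) ^ (-(D : ℝ) / 2) * exp (-‖z‖ ^ 2 / 2))) ∂p₀ := by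
  rw [measureReal_univ_withDensity_prod p₀ volume (by fun_prop) fun q ↦ by
    unfold gibbsKernel; positivity]
  congr 1 with x₀
  have hsplit : ∀ x₁, (2 * π * ε) ^ (-(D : ℝ) / 2) * exp (-ξ x₀) * gibbsKernel ε f (x₀, x₁)
      = (2 * π * ε) ^ (-(D : ℝ) / 2) * exp (-‖x₀ - x₁‖ ^ 2 / (2 * ε)) *
          exp (f x₁ / ε - ξ x₀) := fun x₁ ↦ by
    rw [gibbsKernel, mul_assoc, mul_assoc _ (exp _), ← exp_add, ← exp_add]
    ring_nf
  simp only [hsplit]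
  simpa only [finrank_euclideanSpace_fin] using
    integral_heatKernel_mul volume hε x₀ fun x₁ ↦ exp (f x₁ / ε - ξ x₀)

lemma mul_llr_withDensity_gibbsKernel_ae_eq (hε : 0 < ε)
    (p₀ : Measure (EuclideanSpace ℝ (Fin D))) [SigmaFinite p₀]
    {fstar f ξ Z : EuclideanSpace ℝ (Fin D) → ℝ} (hfstar : Measurable fstar)
    (hf : Measurable f) (hξ : Measurable ξ) (hZm : Measurable Z) (hZpos : ∀ x₀, 0 < Z x₀) :
    (fun q ↦ ε * llr
        ((p₀.prod volume).withDensity fun q ↦ ENNReal.ofReal (gibbsKernel ε fstar q / Z q.1))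
        ((p₀.prod volume).withDensity fun q ↦
          ENNReal.ofReal ((2 * π * ε) ^ (-(D : ℝ) / 2) * exp (-ξ q.1) * gibbsKernel ε f q)) q)
      =ᵐ[p₀.prod volume] fun q ↦
        ε * (ξ q.1 - log (Z q.1) + (D : ℝ) / 2 * log (2 * π * ε)) + (fstar q.2 - f q.2) := by
  filter_upwards [llr_withDensity_ofReal_ae_eq (g := fun q ↦ gibbsKernel ε fstar q / Z q.1)
    (h := fun q ↦ (2 * π * ε) ^ (-(D : ℝ) / 2) * exp (-ξ q.1) * gibbsKernel ε f q)
    (by fun_prop) (by fun_prop)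
    (fun q ↦ div_nonneg (exp_pos _).le (hZpos q.1).le)
    fun q ↦ by unfold gibbsKernel; positivity] with q hq
  rw [hq, mul_log_gibbsKernel_ratio hε q (hZpos q.1)]

end Gibbs

theorem vareot_gap_eq_kl_general
    (D : ℕ) (ε : ℝ) (hε : 0 < ε)
    (p₀ p₁ : Measure (EuclideanSpace ℝ (Fin D)))
    [IsProbabilityMeasure p₀]
    (fstar f ξ : EuclideanSpace ℝ (Fin D) → ℝ)
    (hfstar : Measurable fstar) (hf : Measurable f) (hξ : Measurable ξ)
    -- the partition function of the optimal potential, finite and positive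
    (Z : EuclideanSpace ℝ (Fin D) → ℝ)
    (hZdef : ∀ x₀, Z x₀ = ∫ x₁, Real.exp ((fstar x₁ - ‖x₀ - x₁‖ ^ 2 / 2) / ε))
    (hZpos : ∀ x₀, 0 < Z x₀)
    -- the optimal plan π* and the recovered (possibly unnormalized) plan π^{f,ξ}
    (πstar πfξ : Measure (EuclideanSpace ℝ (Fin D) × EuclideanSpace ℝ (Fin D)))
    (hπstar : πstar = (p₀.prod volume).withDensity (fun q =>
      ENNReal.ofReal (Real.exp ((fstar q.2 - ‖q.1 - q.2‖ ^ 2 / 2) / ε) / Z q.1)))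
    (hπfξ : πfξ = (p₀.prod volume).withDensity (fun q =>
      ENNReal.ofReal ((2 * π * ε) ^ (-(D : ℝ) / 2) * Real.exp (-ξ q.1) *
        Real.exp ((f q.2 - ‖q.1 - q.2‖ ^ 2 / 2) / ε))))
    [IsProbabilityMeasure πstar]
    (hmarg : πstar.map Prod.snd = p₁)
    -- all integrals assumed finite
    (hfstarInt : Integrable fstar p₁) (hfInt : Integrable f p₁)
    (hξInt : Integrable ξ p₀)
    (hlogZInt : Integrable (fun x₀ => Real.log (Z x₀)) p₀)
    (hklInt : Integrable (fun q =>
      (πstar.rnDeriv πfξ q).toReal * Real.log (πstar.rnDeriv πfξ q).toReal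
        - (πstar.rnDeriv πfξ q).toReal + 1) πfξ) :
    ε * genKL πstar πfξ =
      ((∫ x₁, fstar x₁ ∂p₁) - ε * ∫ x₀, Real.log (Z x₀) ∂p₀) -
      (ε * (1 - ((D : ℝ) / 2) * Real.log (2 * π * ε)) +
        (∫ x₁, f x₁ ∂p₁) - ε * (∫ x₀, ξ x₀ ∂p₀) -
        ε * ∫ x₀, (∫ z, Real.exp (f (x₀ + Real.sqrt ε • z) / ε - ξ x₀) *
          ((2 * π) ^ (-(D : ℝ) / 2) * Real.exp (-‖z‖ ^ 2 / 2))) ∂p₀) := by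
  have hZm : Measurable Z := by
    rw [funext hZdef]
    exact (measurable_gibbsKernel (ε := ε) hfstar).stronglyMeasurable
      |>.integral_prod_right' |>.measurable
  have hfst : πstar.map Prod.fst = p₀ := hπstar ▸
    map_fst_withDensity_div_integral p₀ volume (measurable_gibbsKernel hfstar)
      (fun q ↦ (exp_pos _).le) hZdef hZpos
  have hac : πstar ≪ πfξ := by
    rw [hπstar, hπfξ]
    exact (withDensity_absolutelyContinuous _ _).trans
      (withDensity_absolutelyContinuous' (by fun_prop) (ae_of_all _ fun q ↦ by simp; positivity))
  rw [genKL_integrand_eq_klFun] at hklInt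
  have hfin := isFiniteMeasure_of_integrable_klFun_rnDeriv hklInt
  have hllr : (fun q ↦ ε * llr πstar πfξ q) =ᵐ[πstar] fun q ↦
      ε * (ξ q.1 - log (Z q.1) + (D : ℝ) / 2 * log (2 * π * ε)) + (fstar q.2 - f q.2) := by
    subst hπstar hπfξ
    exact withDensity_absolutelyContinuous _ _
      (mul_llr_withDensity_gibbsKernel_ae_eq hε p₀ hfstar hf hξ hZm hZpos)
  have hξlogZInt : Integrable (fun x₀ ↦ ξ x₀ - log (Z x₀)) p₀ := hξInt.sub hlogZInt
  have hεllr : ε * ∫ q, llr πstar πfξ q ∂πstar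
      = ε * (∫ x₀, ξ x₀ ∂p₀ - ∫ x₀, log (Z x₀) ∂p₀ + (D : ℝ) / 2 * log (2 * π * ε))
        + (∫ x₁, fstar x₁ ∂p₁ - ∫ x₁, f x₁ ∂p₁) := by
    rw [← integral_const_mul, integral_congr_ae hllr, integral_add_comp_fst_snd
        (a := fun x₀ ↦ ε * (ξ x₀ - log (Z x₀) + (D : ℝ) / 2 * log (2 * π * ε)))
        (b := fun x₁ ↦ fstar x₁ - f x₁) hfst hmarg
        ((hξlogZInt.add (integrable_const ((D : ℝ) / 2 * log (2 * π * ε)))).const_mul ε)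
        (hfstarInt.sub hfInt),
      integral_const_mul, integral_add hξlogZInt (integrable_const _), integral_sub hξInt hlogZInt,
      integral_sub hfstarInt hfInt, integral_const, probReal_univ, one_smul]
  have hmass : πfξ.real univ = ∫ x₀, (∫ z, exp (f (x₀ + √ε • z) / ε - ξ x₀) *
      ((2 * π) ^ (-(D : ℝ) / 2) * exp (-‖z‖ ^ 2 / 2))) ∂p₀ := by
    subst hπfξ
    exact measureReal_univ_withDensity_gibbsKernel hε p₀ hf hξ (hfin := hfin)
  rw [genKL_eq_integral_llr hac hklInt, hmass, probReal_univ]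
  linear_combination hεllr

theorem vareot_gap_eq_kl
    (D : ℕ) (ε : ℝ) (hε : 0 < ε)
    (p₀ p₁ : Measure (EuclideanSpace ℝ (Fin D)))
    [IsProbabilityMeasure p₀] [IsProbabilityMeasure p₁]
    (fstar f ξ : EuclideanSpace ℝ (Fin D) → ℝ)
    (hfstar : Measurable fstar) (hf : Measurable f) (hξ : Measurable ξ)
    -- the partition function of the optimal potential, finite and positive
    (Z : EuclideanSpace ℝ (Fin D) → ℝ)
    (hZdef : ∀ x₀, Z x₀ = ∫ x₁, Real.exp ((fstar x₁ - ‖x₀ - x₁‖ ^ 2 / 2) / ε))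
    (hZint : ∀ x₀, Integrable
      (fun x₁ => Real.exp ((fstar x₁ - ‖x₀ - x₁‖ ^ 2 / 2) / ε)) volume)
    (hZpos : ∀ x₀, 0 < Z x₀)
    -- the optimal plan π* and the recovered (possibly unnormalized) plan π^{f,ξ}
    (πstar πfξ : Measure (EuclideanSpace ℝ (Fin D) × EuclideanSpace ℝ (Fin D)))
    (hπstar : πstar = (p₀.prod volume).withDensity (fun q =>
      ENNReal.ofReal (Real.exp ((fstar q.2 - ‖q.1 - q.2‖ ^ 2 / 2) / ε) / Z q.1)))
    (hπfξ : πfξ = (p₀.prod volume).withDensity (fun q =>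
      ENNReal.ofReal ((2 * π * ε) ^ (-(D : ℝ) / 2) * Real.exp (-ξ q.1) *
        Real.exp ((f q.2 - ‖q.1 - q.2‖ ^ 2 / 2) / ε))))
    [IsProbabilityMeasure πstar]
    (hmarg : πstar.map Prod.snd = p₁)
    -- all integrals assumed finite
    (hfstarInt : Integrable fstar p₁) (hfInt : Integrable f p₁)
    (hξInt : Integrable ξ p₀)
    (hlogZInt : Integrable (fun x₀ => Real.log (Z x₀)) p₀)
    (hGaussInt : Integrable (fun x₀ =>
      ∫ z, Real.exp (f (x₀ + Real.sqrt ε • z) / ε - ξ x₀) *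
        ((2 * π) ^ (-(D : ℝ) / 2) * Real.exp (-‖z‖ ^ 2 / 2))) p₀)
    (hklInt : Integrable (fun q =>
      (πstar.rnDeriv πfξ q).toReal * Real.log (πstar.rnDeriv πfξ q).toReal
        - (πstar.rnDeriv πfξ q).toReal + 1) πfξ) :
    ε * genKL πstar πfξ =
      ((∫ x₁, fstar x₁ ∂p₁) - ε * ∫ x₀, Real.log (Z x₀) ∂p₀) -
      (ε * (1 - ((D : ℝ) / 2) * Real.log (2 * π * ε)) +
        (∫ x₁, f x₁ ∂p₁) - ε * (∫ x₀, ξ x₀ ∂p₀) -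
        ε * ∫ x₀, (∫ z, Real.exp (f (x₀ + Real.sqrt ε • z) / ε - ξ x₀) *
          ((2 * π) ^ (-(D : ℝ) / 2) * Real.exp (-‖z‖ ^ 2 / 2))) ∂p₀) :=
  vareot_gap_eq_kl_general D ε hε p₀ p₁ fstar f ξ hfstar hf hξ Z hZdef hZpos πstar πfξ hπstar hπfξ
    hmarg hfstarInt hfInt hξInt hlogZInt hklInt
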